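/- Let A be an oriented graph on a type V that is a push clique. Then any two distinct non-adjacent vertices u and v have at least two common neighbors, i.e., there exist distinct vertices w ≠ w' each adjacent in A to both u and v. -/

import Mathlib

/-- A directed graph `A` on `V` is an oriented graph: irreflexive and asymmetric. -/
def IsOriented {V : Type*} (A : V → V → Prop) : Prop :=
  (∀ v, ¬ A v v) ∧ ∀ u v, A u v → ¬ A v u

/-- `u` and `v` are adjacent in `A`. -/
def Adj {V : Type*} (A : V → V → Prop) (u v : V) : Prop :=
  A u v ∨ A v u

/-- The push of `A` by the vertex set `S`: arcs with exactly one endpoint in `S`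
are reversed. -/
def push {V : Type*} (S : Set V) (A : V → V → Prop) (u v : V) : Prop :=
  (Xor' (u ∈ S) (v ∈ S) ∧ A v u) ∨ (¬ Xor' (u ∈ S) (v ∈ S) ∧ A u v)

/-- `u` and `v` agree on `w`. -/
def AgreeOn {V : Type*} (A : V → V → Prop) (u v w : V) : Prop :=
  (A w u ∧ A w v) ∨ (A u w ∧ A v w)

/-- `u` and `v` disagree on `w`. -/
def DisagreeOn {V : Type*} (A : V → V → Prop) (u v w : V) : Prop :=
  (A u w ∧ A w v) ∨ (A w u ∧ A v w)

/-- `u` and `v` are joined by a directed 2-path in `A`. -/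
def TwoPath {V : Type*} (A : V → V → Prop) (u v : V) : Prop :=
  ∃ w, (A u w ∧ A w v) ∨ (A v w ∧ A w u)

/-- `A` is an oriented clique: any two distinct vertices are adjacent or joined
by a directed 2-path. -/
def IsOrientedClique {V : Type*} (A : V → V → Prop) : Prop :=
  ∀ u v, u ≠ v → Adj A u v ∨ TwoPath A u v

/-- `A` is a push clique: every push of `A` is an oriented clique. -/
def IsPushClique {V : Type*} (A : V → V → Prop) : Prop :=
  ∀ S : Set V, IsOrientedClique (push S A)

/-- `A` is an orientation of the simple graph `G`. -/
def IsOrientationOf {V : Type*} (A : V → V → Prop) (G : SimpleGraph V) : Prop :=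
  IsOriented A ∧ ∀ u v, Adj A u v ↔ G.Adj u v

/-- `G` is an underlying push clique. -/
def IsUnderlyingPushClique {V : Type*} (G : SimpleGraph V) : Prop :=
  ∃ A : V → V → Prop, IsOrientationOf A G ∧ IsPushClique A

/-- `G` is an underlying oriented clique. -/
def IsUnderlyingOrientedClique {V : Type*} (G : SimpleGraph V) : Prop :=
  ∃ A : V → V → Prop, IsOrientationOf A G ∧ IsOrientedClique A

/-!
Take distinct non-adjacent `u`, `v`. As `A` itself is an oriented clique, `u` and `v` are joined
by a 2-path, i.e. they disagree on some `w`. Pushing `{u}` reverses exactly one of the arcs `uz`,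
`vz` for every vertex `z`, so it turns agreement into disagreement; since the pushed graph
is again an oriented clique, `u` and `v` also agree on some `w'`, which differs from `w`.
-/

section

variable {V : Type*} {A : V → V → Prop} {S : Set V} {u v w : V}

theorem adj_push_iff : Adj (push S A) u v ↔ Adj A u v := by
  simp only [Adj, push, Xor', xor_comm (v ∈ S)]
  tauto

theorem push_empty (A : V → V → Prop) : push ∅ A = A := by
  funext u v
  simp [push, Xor']

theorem twoPath_iff_exists_disagreeOn : TwoPath A u v ↔ ∃ w, DisagreeOn A u v w := by
  simp only [TwoPath, DisagreeOn, and_comm (a := A v _)]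

theorem disagreeOn_push_iff (hu : u ∈ S) (hv : v ∉ S) :
    DisagreeOn (push S A) u v w ↔ AgreeOn A u v w := by
  by_cases hw : w ∈ S <;> simp [DisagreeOn, AgreeOn, push, Xor', hu, hv, hw, or_comm]

theorem AgreeOn.not_disagreeOn (hasymm : ∀ x y, A x y → ¬ A y x) (h : AgreeOn A u v w) :
    ¬ DisagreeOn A u v w := by
  unfold AgreeOn DisagreeOn at *
  grind

theorem AgreeOn.adj (h : AgreeOn A u v w) : Adj A u w ∧ Adj A v w := by
  unfold AgreeOn Adj at *
  tauto

theorem DisagreeOn.adj (h : DisagreeOn A u v w) : Adj A u w ∧ Adj A v w := by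
  unfold DisagreeOn Adj at *
  tauto

theorem IsOrientedClique.exists_disagreeOn (hA : IsOrientedClique A) (huv : u ≠ v)
    (hnadj : ¬ Adj A u v) : ∃ w, DisagreeOn A u v w :=
  twoPath_iff_exists_disagreeOn.mp ((hA u v huv).resolve_left hnadj)

theorem IsPushClique.isOrientedClique (h : IsPushClique A) : IsOrientedClique A :=
  push_empty A ▸ h ∅

theorem IsPushClique.exists_agreeOn (h : IsPushClique A) (huv : u ≠ v) (hnadj : ¬ Adj A u v) :
    ∃ w, AgreeOn A u v w := by
  obtain ⟨w, hw⟩ := (h {u}).exists_disagreeOn huv (adj_push_iff.not.mpr hnadj)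
  exact ⟨w, (disagreeOn_push_iff (Set.mem_singleton u) huv.symm).mp hw⟩

end

theorem stmt_7 {V : Type*} (A : V → V → Prop) (hA : IsOriented A)
    (h : IsPushClique A) (u v : V) (huv : u ≠ v) (hnadj : ¬ Adj A u v) :
    ∃ w w' : V, w ≠ w' ∧ Adj A u w ∧ Adj A v w ∧ Adj A u w' ∧ Adj A v w' := by
  obtain ⟨w, hw⟩ := h.isOrientedClique.exists_disagreeOn huv hnadj
  obtain ⟨w', hw'⟩ := h.exists_agreeOn huv hnadj
  refine ⟨w, w', ?_, hw.adj.1, hw.adj.2, hw'.adj.1, hw'.adj.2⟩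
  rintro rfl
  exact hw'.not_disagreeOn hA.2 hw
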